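/- Let q ≥ 0, r > 0, v > 0, σ_n ∈ ℝ, let a_min ≤ a_max and b_min ≤ b_max be reals, and let 𝒮 = {f ∈ ℝ : |a + b f| < 1 for all a ∈ [a_min, a_max] and b ∈ [b_min, b_max]}. Define, for f, f' ∈ 𝒮, the nonparametric LQR kernel k_nLQR(f, f') = σ_n² · ∫_{b_min}^{b_max} ∫_{a_min}^{a_max} φ_{(a,b)}(f)·φ_{(a,b)}(f') da db, where φ_{(a,b)}(f) = v·(q + r·f²)/(1 − (a + b f)²). Then k_nLQR is positive semidefinite on 𝒮: for every N ∈ ℕ, every θ_1, …, θ_N ∈ 𝒮 and every z ∈ ℝ^N, Σ_{i=1}^{N} Σ_{j=1}^{N} z_i·z_j·k_nLQR(θ_i, θ_j) ≥ 0. -/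
import Mathlib


open Set


open MeasureTheory in
lemma aux_sum_sum_intervalIntegral {N : ℕ} (c : Fin N → Fin N → ℝ)
    (F : Fin N → Fin N → ℝ → ℝ) (a₁ a₂ : ℝ)
    (hF : ∀ i j, IntervalIntegrable (F i j) volume a₁ a₂) :
    (∫ x in a₁..a₂, ∑ i : Fin N, ∑ j : Fin N, c i j * F i j x) =
      ∑ i : Fin N, ∑ j : Fin N, c i j * ∫ x in a₁..a₂, F i j x := by
  have hrow : ∀ i : Fin N,
      IntervalIntegrable (fun x => ∑ j : Fin N, c i j * F i j x) volume a₁ a₂ := by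
    intro i
    have h3 := IntervalIntegrable.sum (μ := volume) (a := a₁) (b := a₂)
      (f := fun j x => c i j * F i j x) Finset.univ (fun j _ => (hF i j).const_mul _)
    rwa [Finset.sum_fn] at h3
  calc (∫ x in a₁..a₂, ∑ i : Fin N, ∑ j : Fin N, c i j * F i j x)
      = ∑ i : Fin N, ∫ x in a₁..a₂, ∑ j : Fin N, c i j * F i j x :=
        intervalIntegral.integral_finset_sum (f := fun i x => ∑ j : Fin N, c i j * F i j x)
          (fun i _ => hrow i)
    _ = ∑ i : Fin N, ∑ j : Fin N, c i j * ∫ x in a₁..a₂, F i j x := by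
        refine Finset.sum_congr rfl fun i _ => ?_
        calc (∫ x in a₁..a₂, ∑ j : Fin N, c i j * F i j x)
            = ∑ j : Fin N, ∫ x in a₁..a₂, c i j * F i j x :=
              intervalIntegral.integral_finset_sum (f := fun j x => c i j * F i j x)
                (fun j _ => (hF i j).const_mul _)
          _ = ∑ j : Fin N, c i j * ∫ x in a₁..a₂, F i j x :=
              Finset.sum_congr rfl fun j _ => intervalIntegral.integral_const_mul _ _

open MeasureTheory in
lemma aux_sq_intervalIntegral {N : ℕ} (z : Fin N → ℝ) (G : Fin N → ℝ → ℝ)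
    (a₁ a₂ : ℝ)
    (hG : ∀ i j, IntervalIntegrable (fun x => G i x * G j x) volume a₁ a₂) :
    (∫ x in a₁..a₂, (∑ i : Fin N, z i * G i x) ^ 2) =
      ∑ i : Fin N, ∑ j : Fin N, z i * z j * ∫ x in a₁..a₂, G i x * G j x := by
  have expand : (fun x => (∑ i : Fin N, z i * G i x) ^ 2) =
      fun x => ∑ i : Fin N, ∑ j : Fin N, (z i * z j) * (G i x * G j x) := by
    funext x
    rw [sq, Finset.sum_mul_sum]
    exact Finset.sum_congr rfl fun i _ => Finset.sum_congr rfl fun j _ => by ring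
  rw [expand, aux_sum_sum_intervalIntegral (fun i j => z i * z j) _ _ _ hG]

set_option maxHeartbeats 1600000 in
theorem nonparametric_lqr_kernel_posSemidef
    (q r v σn a_min a_max b_min b_max : ℝ)
    (hq : 0 ≤ q) (hr : 0 < r) (hv : 0 < v)
    (ha : a_min ≤ a_max) (hb : b_min ≤ b_max)
    (S : Set ℝ)
    (hS : S = {f : ℝ | ∀ a ∈ Icc a_min a_max, ∀ b ∈ Icc b_min b_max, |a + b * f| < 1})
    (φ : ℝ → ℝ → ℝ → ℝ)
    (hφ : ∀ a b f : ℝ, φ a b f = v * (q + r * f ^ 2) / (1 - (a + b * f) ^ 2))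
    (k : ℝ → ℝ → ℝ)
    (hk : ∀ f f' : ℝ,
      k f f' = σn ^ 2 * ∫ b in b_min..b_max, ∫ a in a_min..a_max, φ a b f * φ a b f')
    (N : ℕ) (θ : Fin N → ℝ) (hθ : ∀ i, θ i ∈ S) (z : Fin N → ℝ) :
    0 ≤ ∑ i : Fin N, ∑ j : Fin N, z i * z j * k (θ i) (θ j) := by
  rcases Nat.eq_zero_or_pos N with hN | hN
  · subst hN; simp
  -- The compact set of relevant parameters
  have hθ' : ∀ i, ∀ a ∈ Icc a_min a_max, ∀ b ∈ Icc b_min b_max, |a + b * θ i| < 1 := by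
    intro i
    have := hθ i
    rw [hS] at this
    exact this
  set K : Set ((ℝ × ℝ) × ℝ) :=
    (Icc a_min a_max ×ˢ Icc b_min b_max) ×ˢ (Set.range θ) with hK
  have hKc : IsCompact K :=
    ((isCompact_Icc.prod isCompact_Icc).prod (Set.finite_range θ).isCompact)
  have hKne : K.Nonempty := by
    refine ⟨((a_min, b_min), θ ⟨0, hN⟩), ?_⟩
    constructor
    · exact ⟨⟨le_refl _, ha⟩, ⟨le_refl _, hb⟩⟩
    · exact ⟨⟨0, hN⟩, rfl⟩
  set g : (ℝ × ℝ) × ℝ → ℝ := fun p => 1 - (p.1.1 + p.1.2 * p.2) ^ 2 with hg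
  have hgc : Continuous g := by fun_prop
  obtain ⟨p0, hp0K, hp0min⟩ := hKc.exists_isMinOn hKne hgc.continuousOn
  set ε : ℝ := g p0 with hε
  have hεpos : 0 < ε := by
    obtain ⟨⟨ha0, hb0⟩, i0, hi0⟩ := hp0K
    have h1 : |p0.1.1 + p0.1.2 * θ i0| < 1 := hθ' i0 _ ha0 _ hb0
    have h2 : (p0.1.1 + p0.1.2 * θ i0) ^ 2 < 1 := by
      have := abs_lt.mp h1
      nlinarith
    rw [hε, hg]
    simp only
    rw [← hi0]
    linarith
  have hεle : ∀ i, ∀ a ∈ Icc a_min a_max, ∀ b ∈ Icc b_min b_max,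
      ε ≤ 1 - (a + b * θ i) ^ 2 := by
    intro i a haI b hbI
    exact hp0min (⟨⟨haI, hbI⟩, ⟨i, rfl⟩⟩ : ((a, b), θ i) ∈ K)
  -- modified globally continuous feature
  set Φ : ℝ → ℝ → ℝ → ℝ :=
    fun a b f => v * (q + r * f ^ 2) / max (1 - (a + b * f) ^ 2) ε with hΦ
  have hΦeq : ∀ i, ∀ a ∈ Icc a_min a_max, ∀ b ∈ Icc b_min b_max,
      Φ a b (θ i) = φ a b (θ i) := by
    intro i a haI b hbI
    rw [hΦ, hφ]
    simp only
    rw [max_eq_left (hεle i a haI b hbI)]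
  have hΦcont : ∀ f : ℝ, Continuous fun p : ℝ × ℝ => Φ p.2 p.1 f := by
    intro f
    apply Continuous.div
    · fun_prop
    · fun_prop
    · intro p
      have : ε ≤ max (1 - (p.2 + p.1 * f) ^ 2) ε := le_max_right _ _
      positivity
  -- continuity in `a` for fixed `b`
  have hΦconta : ∀ (b : ℝ) (f : ℝ), Continuous fun a : ℝ => Φ a b f := by
    intro b f
    exact (hΦcont f).comp (by fun_prop : Continuous fun a : ℝ => (b, a))
  -- step 1 : rewrite k using Φ
  have key : ∀ i j, k (θ i) (θ j) =
      σn ^ 2 * ∫ b in b_min..b_max, ∫ a in a_min..a_max, Φ a b (θ i) * Φ a b (θ j) := by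
    intro i j
    rw [hk]
    congr 1
    apply intervalIntegral.integral_congr
    intro b hbI
    rw [uIcc_of_le hb] at hbI
    apply intervalIntegral.integral_congr
    intro a haI
    rw [uIcc_of_le ha] at haI
    show φ a b (θ i) * φ a b (θ j) = Φ a b (θ i) * Φ a b (θ j)
    rw [hΦeq i a haI b hbI, hΦeq j a haI b hbI]
  -- integrability facts
  have hinner : ∀ (b : ℝ) (i j : Fin N),
      IntervalIntegrable (fun a => Φ a b (θ i) * Φ a b (θ j)) MeasureTheory.volume
        a_min a_max := by
    intro b i j
    exact ((hΦconta b (θ i)).mul (hΦconta b (θ j))).intervalIntegrable _ _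
  have houter : ∀ i j : Fin N,
      Continuous fun b => ∫ a in a_min..a_max, Φ a b (θ i) * Φ a b (θ j) := by
    intro i j
    apply intervalIntegral.continuous_parametric_intervalIntegral_of_continuous'
      (f := fun b a => Φ a b (θ i) * Φ a b (θ j))
    exact ((hΦcont (θ i)).comp continuous_id).mul ((hΦcont (θ j)).comp continuous_id)
  -- main computation
  have main : ∑ i : Fin N, ∑ j : Fin N, z i * z j * k (θ i) (θ j) =
      σn ^ 2 * ∫ b in b_min..b_max, ∫ a in a_min..a_max,
        (∑ i : Fin N, z i * Φ a b (θ i)) ^ 2 := by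
    have swap_inner : ∀ b : ℝ,
        (∫ a in a_min..a_max, (∑ i : Fin N, z i * Φ a b (θ i)) ^ 2) =
        ∑ i : Fin N, ∑ j : Fin N, z i * z j *
          ∫ a in a_min..a_max, Φ a b (θ i) * Φ a b (θ j) := fun b =>
      aux_sq_intervalIntegral z (fun i a => Φ a b (θ i)) a_min a_max (hinner b)
    have swap_outer :
        (∫ b in b_min..b_max, ∑ i : Fin N, ∑ j : Fin N, (z i * z j) *
          ∫ a in a_min..a_max, Φ a b (θ i) * Φ a b (θ j)) =
        ∑ i : Fin N, ∑ j : Fin N, (z i * z j) *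
          ∫ b in b_min..b_max, ∫ a in a_min..a_max, Φ a b (θ i) * Φ a b (θ j) :=
      aux_sum_sum_intervalIntegral (fun i j => z i * z j)
        (fun i j b => ∫ a in a_min..a_max, Φ a b (θ i) * Φ a b (θ j)) b_min b_max
        (fun i j => (houter i j).intervalIntegrable _ _)
    calc ∑ i : Fin N, ∑ j : Fin N, z i * z j * k (θ i) (θ j)
        = σn ^ 2 * ∑ i : Fin N, ∑ j : Fin N, z i * z j *
            ∫ b in b_min..b_max, ∫ a in a_min..a_max, Φ a b (θ i) * Φ a b (θ j) := by
          rw [Finset.mul_sum]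
          apply Finset.sum_congr rfl
          intro i _
          rw [Finset.mul_sum]
          apply Finset.sum_congr rfl
          intro j _
          rw [key i j]; ring
      _ = σn ^ 2 * ∫ b in b_min..b_max, ∫ a in a_min..a_max,
            (∑ i : Fin N, z i * Φ a b (θ i)) ^ 2 := by
          rw [← swap_outer]
          congr 1
          apply intervalIntegral.integral_congr
          intro b _
          exact (swap_inner b).symm
  rw [main]
  apply mul_nonneg (sq_nonneg _)
  apply intervalIntegral.integral_nonneg hb
  intro b _
  apply intervalIntegral.integral_nonneg ha
  intro a _
  exact sq_nonneg _
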